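/- arXiv:1905.08234 — 2 statements merged into one kernel-verified Lean document; each statement's English description precedes it below -/
import Mathlib

section
/- In the winner-bid auction with valuations v_l < v_h, for every Nash equilibrium σ there exists an integer p with v_l/2 ≤ p ≤ v_h/2 such that the support of the lower-valuation agent's strategy is contained in {0,...,p}, the support of the higher-valuation agent's strategy is contained in {p,...,p̄}, and p is in the support of the higher-valuation agent's strategy. -/
/-!
Write `vl = 2m`, `vh = 2n`, let `p` be the lowest bid of the high agent and `q` the highest
bid of the low agent. A bid above half one's value is beaten by the bid just below it as soon
as the opponent sometimes bids at or below it; this yields `q ≤ m` unless `q < p`, and `p ≤ n`.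
If `p < q` or `p < m`, then either the low agent sometimes bids some `r < p` and would rather
bid `max p q`, or all her bids lie in `[p, q]` and the high agent would rather bid `q + 1`
than `p`.
-/

open Finset Filter

/-- Utility in the winner-bid auction for an agent with value `v` bidding `b`
when the opponent bids `c`: the higher bidder wins the object and pays their own
bid to the other agent; ties are broken uniformly at random. -/
noncomputable def util (v b c : ℕ) : ℝ :=
  if c < b then (v : ℝ) - b
  else if b < c then (c : ℝ)
  else (((v : ℝ) - b) + b) / 2

/-- Expected utility of bidding `b` against the mixed strategy `σ` of the opponent. -/
noncomputable def eu (pbar v : ℕ) (σ : ℕ → ℝ) (b : ℕ) : ℝ :=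
  ∑ c ∈ range (pbar + 1), σ c * util v b c

/-- A mixed strategy on the bid space `{0,...,pbar}`. -/
def IsStrategy (pbar : ℕ) (σ : ℕ → ℝ) : Prop :=
  (∀ b, 0 ≤ σ b) ∧ (∑ b ∈ range (pbar + 1), σ b = 1) ∧ ∀ b, pbar < b → σ b = 0

/-- Nash equilibrium of the winner-bid auction with valuations `vl` (agent l) and
`vh` (agent h). -/
def IsNash (pbar vl vh : ℕ) (σl σh : ℕ → ℝ) : Prop :=
  IsStrategy pbar σl ∧ IsStrategy pbar σh ∧
  (∀ b ∈ range (pbar + 1), 0 < σl b →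
    ∀ b' ∈ range (pbar + 1), eu pbar vl σh b' ≤ eu pbar vl σh b) ∧
  (∀ b ∈ range (pbar + 1), 0 < σh b →
    ∀ b' ∈ range (pbar + 1), eu pbar vh σl b' ≤ eu pbar vh σl b)

/-- Expected payoff of the agent with value `v` playing `σown` against `σopp`. -/
noncomputable def payoff (pbar v : ℕ) (σown σopp : ℕ → ℝ) : ℝ :=
  ∑ b ∈ range (pbar + 1), σown b * eu pbar v σopp b

/-- Probability that the agent playing `σown` receives the object. -/
noncomputable def winProb (pbar : ℕ) (σown σopp : ℕ → ℝ) : ℝ :=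
  ∑ b ∈ range (pbar + 1), ∑ c ∈ range (pbar + 1),
    σown b * σopp c * (if c < b then 1 else if b < c then 0 else 1 / 2)

/-- An equilibrium is efficient if the higher-valuation agent (playing `σh`)
receives the object with probability one, i.e., the lower-valuation agent
receives it with probability zero. -/
def Efficient (pbar : ℕ) (σl σh : ℕ → ℝ) : Prop := winProb pbar σl σh = 0

/-- The pure strategy bidding `b`. -/
noncomputable def pureS (b : ℕ) : ℕ → ℝ := fun c => if c = b then 1 else 0

/-- Weak payoff monotonicity for the agent with value `v` playing `σown` against `σopp`. -/
def WPMon (pbar v : ℕ) (σown σopp : ℕ → ℝ) : Prop :=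
  ∀ m ∈ range (pbar + 1), ∀ n ∈ range (pbar + 1),
    σown n < σown m → eu pbar v σopp n < eu pbar v σopp m

/-- (Full) payoff monotonicity for the agent with value `v`. -/
def PMon (pbar v : ℕ) (σown σopp : ℕ → ℝ) : Prop :=
  ∀ m ∈ range (pbar + 1), ∀ n ∈ range (pbar + 1),
    (eu pbar v σopp n ≤ eu pbar v σopp m ↔ σown n ≤ σown m)

/-- Empirical equilibrium: a Nash equilibrium that is the pointwise limit of a
sequence of weakly payoff monotone strategy profiles. -/
def IsEmpirical (pbar vl vh : ℕ) (σl σh : ℕ → ℝ) : Prop :=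
  IsNash pbar vl vh σl σh ∧
  ∃ s : ℕ → (ℕ → ℝ) × (ℕ → ℝ),
    (∀ n, IsStrategy pbar (s n).1 ∧ IsStrategy pbar (s n).2 ∧
      WPMon pbar vl (s n).1 (s n).2 ∧ WPMon pbar vh (s n).2 (s n).1) ∧
    ∀ b, Tendsto (fun n => (s n).1 b) atTop (nhds (σl b)) ∧
         Tendsto (fun n => (s n).2 b) atTop (nhds (σh b))

def IsBestResponse (pbar v : ℕ) (σ : ℕ → ℝ) (b : ℕ) : Prop :=
  ∀ b' ∈ range (pbar + 1), eu pbar v σ b' ≤ eu pbar v σ b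

theorem IsStrategy.le_of_pos {pbar : ℕ} {σ : ℕ → ℝ} (hσ : IsStrategy pbar σ) {b : ℕ}
    (hb : 0 < σ b) : b ≤ pbar :=
  not_lt.1 fun h => hb.ne' (hσ.2.2 b h)

theorem IsStrategy.exists_pos {pbar : ℕ} {σ : ℕ → ℝ} (hσ : IsStrategy pbar σ) :
    ∃ b, 0 < σ b := by
  by_contra! h
  have h0 : ∑ b ∈ range (pbar + 1), σ b = 0 :=
    sum_eq_zero fun b _ => le_antisymm (h b) (hσ.1 b)
  linarith [hσ.2.1]

theorem IsStrategy.exists_isLeast_support {pbar : ℕ} {σ : ℕ → ℝ} (hσ : IsStrategy pbar σ) :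
    ∃ p, IsLeast {b | 0 < σ b} p := by
  classical
  exact ⟨Nat.find hσ.exists_pos, Nat.find_spec hσ.exists_pos, fun _ hb => Nat.find_min' _ hb⟩

theorem IsStrategy.exists_isGreatest_support {pbar : ℕ} {σ : ℕ → ℝ} (hσ : IsStrategy pbar σ) :
    ∃ q, IsGreatest {b | 0 < σ b} q := by
  classical
  obtain ⟨b, hb⟩ := hσ.exists_pos
  exact ⟨Nat.findGreatest (fun b => 0 < σ b) pbar,
    Nat.findGreatest_spec (hσ.le_of_pos hb) hb,
    fun c hc => Nat.le_findGreatest (hσ.le_of_pos hc) hc⟩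

theorem IsNash.isBestResponse_left {pbar vl vh : ℕ} {σl σh : ℕ → ℝ}
    (hN : IsNash pbar vl vh σl σh) {b : ℕ} (hb : 0 < σl b) : IsBestResponse pbar vl σh b :=
  hN.2.2.1 b (mem_range.2 (Nat.lt_succ_of_le (hN.1.le_of_pos hb))) hb

theorem IsNash.isBestResponse_right {pbar vl vh : ℕ} {σl σh : ℕ → ℝ}
    (hN : IsNash pbar vl vh σl σh) {b : ℕ} (hb : 0 < σh b) : IsBestResponse pbar vh σl b :=
  hN.2.2.2 b (mem_range.2 (Nat.lt_succ_of_le (hN.2.1.le_of_pos hb))) hb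

theorem IsBestResponse.eq_zero_of_util_lt {pbar v b b' c : ℕ} {σ : ℕ → ℝ}
    (hσ : ∀ c, 0 ≤ σ c) (hb : IsBestResponse pbar v σ b) (hb' : b' ≤ pbar)
    (hle : ∀ c, 0 < σ c → util v b c ≤ util v b' c) (hc : c ≤ pbar)
    (hlt : util v b c < util v b' c) : σ c = 0 := by
  by_contra hne
  have hgain : 0 < ∑ d ∈ range (pbar + 1), σ d * (util v b' d - util v b d) := by
    refine sum_pos' (fun d _ => ?_) ⟨c, mem_range.2 (by omega), ?_⟩
    · rcases (hσ d).lt_or_eq with hd | hd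
      · exact mul_nonneg hd.le (sub_nonneg.2 (hle d hd))
      · simp [← hd]
    · exact mul_pos ((hσ c).lt_of_ne' hne) (sub_pos.2 hlt)
  have hdiff : eu pbar v σ b' - eu pbar v σ b =
      ∑ d ∈ range (pbar + 1), σ d * (util v b' d - util v b d) := by
    simp only [eu, ← sum_sub_distrib, mul_sub]
  linarith [hb b' (mem_range.2 (by omega))]

theorem IsBestResponse.eq_zero_of_overbid {pbar v b c : ℕ} {σ : ℕ → ℝ}
    (hσ : ∀ c, 0 ≤ σ c) (hb : IsBestResponse pbar v σ b) (hbp : b ≤ pbar) (hvb : v < 2 * b)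
    (hcb : c ≤ b) : σ c = 0 := by
  obtain ⟨k, rfl⟩ : ∃ k, b = k + 1 := ⟨b - 1, by omega⟩
  refine hb.eq_zero_of_util_lt (b' := k) hσ (by omega) (fun d _ => ?_) (by omega) ?_ <;>
    unfold util <;> split_ifs <;> first | omega | (rify at *; linarith)

theorem IsBestResponse.eq_zero_of_underbid {pbar v r t c : ℕ} {σ : ℕ → ℝ}
    (hσ : ∀ c, 0 ≤ σ c) (hr : IsBestResponse pbar v σ r) (hsupp : ∀ c, 0 < σ c → r < c)
    (htp : t ≤ pbar) (htv : 2 * t ≤ v) (hrc : r < c) (hct : c ≤ t) (hcv : c + t < v) :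
    σ c = 0 := by
  refine hr.eq_zero_of_util_lt hσ htp (fun d hd => ?_) (by omega) ?_
  · have := hsupp d hd
    unfold util; split_ifs <;> first | omega | (rify at *; linarith)
  · unfold util; split_ifs <;> first | omega | (rify at *; linarith)

theorem IsBestResponse.eq_zero_of_outbid {pbar v p q c : ℕ} {σ : ℕ → ℝ}
    (hσ : ∀ c, 0 ≤ σ c) (hp : IsBestResponse pbar v σ p)
    (hsupp : ∀ c, 0 < σ c → p ≤ c ∧ c ≤ q) (hqp : q + 1 ≤ pbar) (hqv : 2 * (q + 1) ≤ v)
    (hpc : p ≤ c) (hcq : c ≤ q) (hstrict : p < c ∨ 2 * (q + 1) < v) : σ c = 0 := by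
  refine hp.eq_zero_of_util_lt hσ hqp (fun d hd => ?_) (by omega) ?_
  · obtain ⟨hpd, hdq⟩ := hsupp d hd
    unfold util; split_ifs <;> first | omega | (rify at *; linarith)
  · unfold util; split_ifs <;> first | omega | (rify at *; rcases hstrict with h | h <;> linarith)

theorem stmt4_general (vl vh pbar : ℕ) (hevl : Even vl) (hevh : Even vh)
    (hlt : vl < vh) (hpbar : vh / 2 + 2 ≤ pbar) (σl σh : ℕ → ℝ)
    (hN : IsNash pbar vl vh σl σh) :
    ∃ p : ℕ, vl / 2 ≤ p ∧ p ≤ vh / 2 ∧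
      (∀ b, 0 < σl b → b ≤ p) ∧ (∀ b, 0 < σh b → p ≤ b) ∧ 0 < σh p := by
  have hl := hN.1
  have hh := hN.2.1
  obtain ⟨m, rfl⟩ := hevl
  obtain ⟨n, rfl⟩ := hevh
  obtain ⟨p, hσp : 0 < σh p, hpmin⟩ := hh.exists_isLeast_support
  obtain ⟨q, hσq : 0 < σl q, hqmax⟩ := hl.exists_isGreatest_support
  have hp_bar := hh.le_of_pos hσp
  have hq_bar := hl.le_of_pos hσq
  have hq_le : q ≤ m ∨ q < p := by
    by_contra! h
    exact hσp.ne' <| (hN.isBestResponse_left hσq).eq_zero_of_overbid hh.1 hq_bar (by omega) h.2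
  have hp_le : p ≤ n := by
    by_contra! h
    have hpq : p < q := by
      by_contra! hqp
      exact hσq.ne' <|
        (hN.isBestResponse_right hσp).eq_zero_of_overbid hl.1 hp_bar (by omega) hqp
    omega
  have hqp_mp : q ≤ p ∧ m ≤ p := by
    by_contra! h
    by_cases hlow : ∃ r < p, 0 < σl r
    · obtain ⟨r, hrp, hσr⟩ := hlow
      exact hσp.ne' <| (hN.isBestResponse_left hσr).eq_zero_of_underbid (t := max p q) hh.1
        (fun c hc => hrp.trans_le (hpmin hc)) (by omega) (by omega) hrp (by omega) (by omega)
    · push Not at hlow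
      have hsupp : ∀ c, 0 < σl c → p ≤ c ∧ c ≤ q :=
        fun c hc => ⟨not_lt.1 fun hcp => (hlow c hcp).not_gt hc, hqmax hc⟩
      exact hσq.ne' <| (hN.isBestResponse_right hσp).eq_zero_of_outbid hl.1 hsupp (by omega)
        (by omega) (hsupp q hσq).1 le_rfl (by omega)
  exact ⟨p, by omega, by omega, fun b hb => (hqmax hb).trans hqp_mp.1, fun b hb => hpmin hb, hσp⟩

theorem stmt4 (vl vh pbar : ℕ) (hvl : 0 < vl) (hevl : Even vl) (hevh : Even vh)
    (hlt : vl < vh) (hpbar : vh / 2 + 2 ≤ pbar) (σl σh : ℕ → ℝ)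
    (hN : IsNash pbar vl vh σl σh) :
    ∃ p : ℕ, vl / 2 ≤ p ∧ p ≤ vh / 2 ∧
      (∀ b, 0 < σl b → b ≤ p) ∧ (∀ b, 0 < σh b → p ≤ b) ∧ 0 < σh p :=
  stmt4_general vl vh pbar hevl hevh hlt hpbar σl σh hN
end

section
/- In the winner-bid auction with valuations v_l < v_h, if a Nash equilibrium σ is inefficient (the lower-valuation agent wins with positive probability), then the common boundary bid p of the two supports equals v_l/2, and the sum of expected equilibrium payoffs is at least v_h − 1. -/
open Finset Filter

/-!
Bidding `b < p` instead of `p` against a strategy supported on `{p, …, pbar}` changes the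
low agent's payoff only at the tie with `p`, by `σh p * (vl / 2 - p)`. Hence `p ≤ vl / 2`, and
if `p < vl / 2` the low agent bids `p` for sure; the high agent's deviation to `p + 1` then
forces `vh ≤ 2 p + 2 ≤ vl`. So `p = vl / 2`: the low agent earns at least `p` by bidding `p`,
the high agent at least `vh - (p + 1)` by bidding `p + 1`, and the sum is at least `vh - 1`.
-/

open Finset

theorem util_of_lt {v b c : ℕ} (h : c < b) : util v b c = v - b := by
  simp [util, h]

theorem util_of_gt {v b c : ℕ} (h : b < c) : util v b c = c := by
  simp [util, h, h.not_gt]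

theorem util_self (v b : ℕ) : util v b b = v / 2 := by
  simp [util]

namespace IsStrategy

variable {pbar : ℕ} {σ : ℕ → ℝ}

theorem mem_range_of_pos (hσ : IsStrategy pbar σ) {b : ℕ} (hb : 0 < σ b) :
    b ∈ range (pbar + 1) :=
  mem_range.2 <| Nat.lt_succ_of_le <| not_lt.1 fun h => (hσ.2.2 b h).not_gt hb

theorem eq_zero_of_lt {p : ℕ} (hσ : IsStrategy pbar σ) (hsupp : ∀ c, 0 < σ c → p ≤ c)
    {c : ℕ} (hc : c < p) : σ c = 0 :=
  le_antisymm (not_lt.1 fun h => (hsupp c h).not_gt hc) (hσ.1 c)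

theorem le_sum_mul (hσ : IsStrategy pbar σ) {f : ℕ → ℝ} {x : ℝ}
    (h : ∀ b ∈ range (pbar + 1), 0 < σ b → x ≤ f b) :
    x ≤ ∑ b ∈ range (pbar + 1), σ b * f b :=
  calc x = ∑ b ∈ range (pbar + 1), σ b * x := by rw [← sum_mul, hσ.2.1, one_mul]
    _ ≤ ∑ b ∈ range (pbar + 1), σ b * f b := by
      refine sum_le_sum fun b hb => ?_
      rcases (hσ.1 b).eq_or_lt with h0 | hpos
      · simp [← h0]
      · exact mul_le_mul_of_nonneg_left (h b hb hpos) hpos.le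

theorem sum_mul_le (hσ : IsStrategy pbar σ) {f : ℕ → ℝ} {x : ℝ}
    (h : ∀ b ∈ range (pbar + 1), 0 < σ b → f b ≤ x) :
    ∑ b ∈ range (pbar + 1), σ b * f b ≤ x := by
  have := hσ.le_sum_mul (f := fun b => -f b) (x := -x) fun b hb hpos => neg_le_neg (h b hb hpos)
  simpa only [mul_neg, sum_neg_distrib, neg_le_neg_iff] using this

end IsStrategy

section

variable {pbar v : ℕ} {σ : ℕ → ℝ}

theorem eu_sub_eu_of_lt {p b : ℕ} (hσ : IsStrategy pbar σ) (hsupp : ∀ c, 0 < σ c → p ≤ c)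
    (hp : p ∈ range (pbar + 1)) (hb : b < p) :
    eu pbar v σ p - eu pbar v σ b = σ p * ((v : ℝ) / 2 - p) := by
  rw [eu, eu, ← sum_sub_distrib, sum_eq_single_of_mem p hp]
  · rw [util_self, util_of_gt hb]
    ring
  · intro c _ hcp
    rcases hcp.lt_or_gt with hc | hc
    · simp [hσ.eq_zero_of_lt hsupp hc]
    · rw [util_of_gt hc, util_of_gt (hb.trans hc), sub_self]

theorem le_eu_of_le_support {p : ℕ} (hσ : IsStrategy pbar σ) (hsupp : ∀ c, 0 < σ c → p ≤ c)
    (hpv : (p : ℝ) ≤ v / 2) : (p : ℝ) ≤ eu pbar v σ p :=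
  hσ.le_sum_mul fun c _ hc => by
    rcases (hsupp c hc).eq_or_lt with rfl | hlt
    · rwa [util_self]
    · rw [util_of_gt hlt]
      exact_mod_cast hlt.le

theorem le_eu_of_support_lt {b : ℕ} (hσ : IsStrategy pbar σ) (hsupp : ∀ c, 0 < σ c → c < b) :
    (v : ℝ) - b ≤ eu pbar v σ b :=
  hσ.le_sum_mul fun c _ hc => (util_of_lt (hsupp c hc)).ge

theorem eu_le_of_support_eq {b : ℕ} (hσ : IsStrategy pbar σ) (hsupp : ∀ c, 0 < σ c → c = b) :
    eu pbar v σ b ≤ v / 2 :=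
  hσ.sum_mul_le fun c _ hc => by rw [hsupp c hc, util_self]

end

namespace IsNash

variable {pbar vl vh : ℕ} {σl σh : ℕ → ℝ}

theorem eu_low_le_payoff (hN : IsNash pbar vl vh σl σh) {b : ℕ} (hb : b ∈ range (pbar + 1)) :
    eu pbar vl σh b ≤ payoff pbar vl σl σh :=
  hN.1.le_sum_mul fun c hc hpos => hN.2.2.1 c hc hpos b hb

theorem eu_high_le_payoff (hN : IsNash pbar vl vh σl σh) {b : ℕ} (hb : b ∈ range (pbar + 1)) :
    eu pbar vh σl b ≤ payoff pbar vh σh σl :=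
  hN.2.1.le_sum_mul fun c hc hpos => hN.2.2.2 c hc hpos b hb

variable {p : ℕ} (hN : IsNash pbar vl vh σl σh) (hseph : ∀ b, 0 < σh b → p ≤ b)
  (hp : 0 < σh p)
include hN hseph hp

theorem bid_le_half_low (hinef : 0 < σl p) : (p : ℝ) ≤ vl / 2 := by
  rcases Nat.eq_zero_or_pos p with rfl | hp0
  · simp only [Nat.cast_zero]
    positivity
  have hbr := hN.2.2.1 p (hN.1.mem_range_of_pos hinef) hinef 0 (mem_range.2 (by omega))
  rw [← sub_nonneg, eu_sub_eu_of_lt hN.2.1 hseph (hN.2.1.mem_range_of_pos hp) hp0] at hbr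
  exact sub_nonneg.1 ((mul_nonneg_iff_of_pos_left hp).1 hbr)

theorem support_low_eq_of_lt_half (hsepl : ∀ b, 0 < σl b → b ≤ p) (hpv : (p : ℝ) < vl / 2) :
    ∀ b, 0 < σl b → b = p := by
  intro b hb
  refine (hsepl b hb).eq_or_lt.resolve_right fun hlt => ?_
  have hbr := hN.2.2.1 b (hN.1.mem_range_of_pos hb) hb p (hN.2.1.mem_range_of_pos hp)
  rw [← sub_nonpos, eu_sub_eu_of_lt hN.2.1 hseph (hN.2.1.mem_range_of_pos hp) hlt] at hbr
  linarith [mul_pos hp (sub_pos.2 hpv)]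

end IsNash

theorem stmt8_general (vl vh pbar : ℕ) (hevl : Even vl)
    (hlt : vl < vh) (hpbar : vh / 2 + 2 ≤ pbar) (σl σh : ℕ → ℝ)
    (hN : IsNash pbar vl vh σl σh) (p : ℕ)
    (hsepl : ∀ b, 0 < σl b → b ≤ p) (hseph : ∀ b, 0 < σh b → p ≤ b)
    (hp : 0 < σh p) (hinef : 0 < σl p) :
    p = vl / 2 ∧
      (vh : ℝ) - 1 ≤ payoff pbar vl σl σh + payoff pbar vh σh σl := by
  obtain ⟨k, rfl⟩ := hevl
  have hpk : p ≤ k := by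
    have := hN.bid_le_half_low hseph hp hinef
    push_cast at this
    exact_mod_cast (by linarith : (p : ℝ) ≤ k)
  have hp_mem : p ∈ range (pbar + 1) := hN.2.1.mem_range_of_pos hp
  have hp1_mem : p + 1 ∈ range (pbar + 1) := mem_range.2 (by omega)
  have hdev : (vh : ℝ) - (p + 1) ≤ eu pbar vh σl (p + 1) := by
    exact_mod_cast le_eu_of_support_lt hN.1 fun c hc => Nat.lt_succ_of_le (hsepl c hc)
  have hhigh_br := hN.2.2.2 p hp_mem hp (p + 1) hp1_mem
  obtain rfl : p = k := by
    refine le_antisymm hpk (not_lt.1 fun hpk' => ?_)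
    have hpv : (p : ℝ) < ↑(k + k) / 2 := by push_cast; linarith [(Nat.cast_lt (α := ℝ)).2 hpk']
    have htie := eu_le_of_support_eq (v := vh) hN.1 (hN.support_low_eq_of_lt_half hseph hp hsepl hpv)
    have hvh : (vh : ℝ) ≤ 2 * p + 2 := by linarith
    have : vh ≤ 2 * p + 2 := by exact_mod_cast hvh
    omega
  refine ⟨by omega, ?_⟩
  have hlow := (le_eu_of_le_support hN.2.1 hseph (by push_cast; linarith)).trans
    (hN.eu_low_le_payoff hp_mem)
  linarith [hN.eu_high_le_payoff hp1_mem]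

theorem stmt8 (vl vh pbar : ℕ) (hvl : 0 < vl) (hevl : Even vl) (hevh : Even vh)
    (hlt : vl < vh) (hpbar : vh / 2 + 2 ≤ pbar) (σl σh : ℕ → ℝ)
    (hN : IsNash pbar vl vh σl σh) (p : ℕ)
    (hsepl : ∀ b, 0 < σl b → b ≤ p) (hseph : ∀ b, 0 < σh b → p ≤ b)
    (hp : 0 < σh p) (hinef : 0 < σl p) :
    p = vl / 2 ∧
      (vh : ℝ) - 1 ≤ payoff pbar vl σl σh + payoff pbar vh σh σl :=
  stmt8_general vl vh pbar hevl hlt hpbar σl σh hN p hsepl hseph hp hinef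
end
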